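/- (Hörmander's criterion for a trivial bundle.) Let S : ℝⁿ × ℝᴺ → ℝ be smooth, let ∂_ξS : ℝⁿ × ℝᴺ → ℝᴺ denote its fiber derivative, and let e ∈ Σ_S be a point at which the full differential D(∂_ξS)(e) : ℝⁿ × ℝᴺ → ℝᴺ is surjective (transversality). Set K = ker D(∂_ξS)(e) (the tangent space to Σ_S at e). Then: (a) K has dimension n; (b) the differential Di_S(e) of i_S(q,ξ) = (q, ∂_qS(q,ξ)) is injective on K; (c) ω_can(Di_S(e)u, Di_S(e)v) = 0 for all u, v ∈ K. Hence i_S restricted to Σ_S is a Lagrangian immersion into T*ℝⁿ. -/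

import Mathlib

noncomputable section

/-- Euclidean pairing ⟨x, y⟩ on ℝⁿ. -/
def dot {n : ℕ} (x y : Fin n → ℝ) : ℝ := ∑ i, x i * y i

/-- ω_can on T*ℝⁿ = ℝⁿ × ℝⁿ: ω_can(u,v) = ⟨u₁,v₂⟩ − ⟨v₁,u₂⟩. -/
def omegaCan (n : ℕ) (u v : (Fin n → ℝ) × (Fin n → ℝ)) : ℝ :=
  dot u.1 v.2 - dot v.1 u.2

/-- The fiber derivative ∂_ξS : ℝⁿ × ℝᴺ → ℝᴺ. -/
def fiberDeriv (n N : ℕ) (S : (Fin n → ℝ) × (Fin N → ℝ) → ℝ)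
    (e : (Fin n → ℝ) × (Fin N → ℝ)) : Fin N → ℝ :=
  fun j => fderiv ℝ (fun ξ => S (e.1, ξ)) e.2 (Pi.single j 1)

/-- The fiber-critical set Σ_S = {(q,ξ) : ∂_ξS(q,ξ) = 0}. -/
def SigmaS (n N : ℕ) (S : (Fin n → ℝ) × (Fin N → ℝ) → ℝ) :
    Set ((Fin n → ℝ) × (Fin N → ℝ)) :=
  {e | fiberDeriv n N S e = 0}

/-- ∂_qS(q,ξ) as a vector in ℝⁿ. -/
def gradq (n N : ℕ) (S : (Fin n → ℝ) × (Fin N → ℝ) → ℝ)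
    (e : (Fin n → ℝ) × (Fin N → ℝ)) : Fin n → ℝ :=
  fun i => fderiv ℝ (fun q => S (q, e.2)) e.1 (Pi.single i 1)

/-- i_S(q,ξ) = (q, ∂_qS(q,ξ)). -/
def iS (n N : ℕ) (S : (Fin n → ℝ) × (Fin N → ℝ) → ℝ)
    (e : (Fin n → ℝ) × (Fin N → ℝ)) : (Fin n → ℝ) × (Fin n → ℝ) :=
  (e.1, gradq n N S e)

section Aux

variable {n N : ℕ}

local notation "E" => (Fin n → ℝ) × (Fin N → ℝ)

/-- decomposition of a covector applied to (0, w) -/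
lemma apply_zero_right (L : ((Fin n → ℝ) × (Fin N → ℝ)) →L[ℝ] ℝ) (w : Fin N → ℝ) :
    L ((0 : Fin n → ℝ), w) = ∑ j, w j * L ((0 : Fin n → ℝ), Pi.single j 1) := by
  have h : ((0 : Fin n → ℝ), w) = ∑ j, w j • (((0 : Fin n → ℝ), Pi.single j 1) : E) := by
    apply Prod.ext
    · rw [Prod.fst_sum]; simp
    · rw [Prod.snd_sum]
      simp only [Prod.smul_mk]
      calc w = ∑ j, Pi.single j (w j) := (Finset.univ_sum_single w).symm
      _ = ∑ j, w j • (Pi.single j 1 : Fin N → ℝ) :=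
        Finset.sum_congr rfl fun j _ => by rw [← Pi.single_smul, smul_eq_mul, mul_one]
  rw [h, map_sum]
  refine Finset.sum_congr rfl fun j _ => ?_
  rw [map_smul, smul_eq_mul]

lemma apply_zero_left (L : ((Fin n → ℝ) × (Fin N → ℝ)) →L[ℝ] ℝ) (q : Fin n → ℝ) :
    L (q, (0 : Fin N → ℝ)) = ∑ i, q i * L (Pi.single i 1, (0 : Fin N → ℝ)) := by
  have h : (q, (0 : Fin N → ℝ)) = ∑ i, q i • ((Pi.single i 1, (0 : Fin N → ℝ)) : E) := by
    apply Prod.ext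
    · rw [Prod.fst_sum]
      simp only [Prod.smul_mk]
      calc q = ∑ i, Pi.single i (q i) := (Finset.univ_sum_single q).symm
      _ = ∑ i, q i • (Pi.single i 1 : Fin n → ℝ) :=
        Finset.sum_congr rfl fun i _ => by rw [← Pi.single_smul, smul_eq_mul, mul_one]
    · rw [Prod.snd_sum]; simp
  rw [h, map_sum]
  refine Finset.sum_congr rfl fun i _ => ?_
  rw [map_smul, smul_eq_mul]

lemma apply_split (L : ((Fin n → ℝ) × (Fin N → ℝ)) →L[ℝ] ℝ) (x : (Fin n → ℝ) × (Fin N → ℝ)) :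
    L x = L (x.1, (0 : Fin N → ℝ)) + L ((0 : Fin n → ℝ), x.2) := by
  rw [← map_add]
  congr 1
  ext <;> simp

lemma sum_sq_eq_zero {N : ℕ} (w : Fin N → ℝ) (h : ∑ k, w k * w k = 0) : w = 0 := by
  funext j
  have := (Finset.sum_eq_zero_iff_of_nonneg
    (fun k _ => mul_self_nonneg (w k))).mp h j (Finset.mem_univ j)
  simpa using mul_self_eq_zero.mp this

end Aux

set_option maxHeartbeats 1000000 in
/-- Hörmander's criterion: at a transverse fiber-critical point e, the kernel K of D(∂_ξS)(e)
has dimension n, Di_S(e) is injective on K, and the image of K under Di_S(e) is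
ω_can-isotropic. -/
theorem stmt_4 (n N : ℕ) (S : (Fin n → ℝ) × (Fin N → ℝ) → ℝ) (hS : ContDiff ℝ (⊤ : ℕ∞) S)
    (e : (Fin n → ℝ) × (Fin N → ℝ)) (he : e ∈ SigmaS n N S)
    (htrans : Function.Surjective (fderiv ℝ (fiberDeriv n N S) e)) :
    Module.finrank ℝ (LinearMap.ker (fderiv ℝ (fiberDeriv n N S) e : (Fin n → ℝ) × (Fin N → ℝ) →ₗ[ℝ] Fin N → ℝ)) = n ∧
    (∀ u ∈ LinearMap.ker (fderiv ℝ (fiberDeriv n N S) e : (Fin n → ℝ) × (Fin N → ℝ) →ₗ[ℝ] Fin N → ℝ),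
      fderiv ℝ (iS n N S) e u = 0 → u = 0) ∧
    (∀ u ∈ LinearMap.ker (fderiv ℝ (fiberDeriv n N S) e : (Fin n → ℝ) × (Fin N → ℝ) →ₗ[ℝ] Fin N → ℝ),
      ∀ v ∈ LinearMap.ker (fderiv ℝ (fiberDeriv n N S) e : (Fin n → ℝ) × (Fin N → ℝ) →ₗ[ℝ] Fin N → ℝ),
        omegaCan n (fderiv ℝ (iS n N S) e u) (fderiv ℝ (iS n N S) e v) = 0) := by
  classical
  have hdiff : Differentiable ℝ S := hS.differentiable (by simp)
  set f' : ((Fin n → ℝ) × (Fin N → ℝ)) → (((Fin n → ℝ) × (Fin N → ℝ)) →L[ℝ] ℝ) := fderiv ℝ S with hf'def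
  have hf' : ∀ y, HasFDerivAt S (f' y) y := fun y => (hdiff y).hasFDerivAt
  have hC : ContDiff ℝ (⊤ : ℕ∞) f' := hS.fderiv_right (by simp)
  set f'' : ((Fin n → ℝ) × (Fin N → ℝ)) →L[ℝ] (((Fin n → ℝ) × (Fin N → ℝ)) →L[ℝ] ℝ) := fderiv ℝ f' e with hf''def
  have hf'' : HasFDerivAt f' f'' e := (hC.differentiable (by simp) e).hasFDerivAt
  have hsymm : ∀ v w : ((Fin n → ℝ) × (Fin N → ℝ)), f'' v w = f'' w v :=
    second_derivative_symmetric hf' hf''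
  -- formula for fiberDeriv
  have hfib : fiberDeriv n N S = fun x j => f' x ((0 : Fin n → ℝ), Pi.single j 1) := by
    funext x j
    have h1 : HasFDerivAt (fun ξ => S (x.1, ξ))
        ((f' (x.1, x.2)).comp (ContinuousLinearMap.inr ℝ (Fin n → ℝ) (Fin N → ℝ))) x.2 :=
      (hf' (x.1, x.2)).comp x.2 (hasFDerivAt_prodMk_right x.1 x.2)
    rw [fiberDeriv, h1.fderiv]
    simp
  have hgrad : gradq n N S = fun x i => f' x (Pi.single i 1, (0 : Fin N → ℝ)) := by
    funext x i
    have h1 : HasFDerivAt (fun q => S (q, x.2))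
        ((f' (x.1, x.2)).comp (ContinuousLinearMap.inl ℝ (Fin n → ℝ) (Fin N → ℝ))) x.1 :=
      (hf' (x.1, x.2)).comp x.1 (hasFDerivAt_prodMk_left x.1 x.2)
    rw [gradq, h1.fderiv]
    simp
  -- derivative of fiberDeriv
  set Φ : (((Fin n → ℝ) × (Fin N → ℝ)) →L[ℝ] ℝ) →L[ℝ] (Fin N → ℝ) :=
    ContinuousLinearMap.pi (fun j => ContinuousLinearMap.apply ℝ ℝ
      (((0 : Fin n → ℝ), Pi.single j 1) : ((Fin n → ℝ) × (Fin N → ℝ)))) with hΦdef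
  have hDfib : fderiv ℝ (fiberDeriv n N S) e = Φ.comp f'' := by
    have : HasFDerivAt (fiberDeriv n N S) (Φ.comp f'') e := by
      rw [hfib]
      exact (Φ.hasFDerivAt.comp e hf'')
    exact this.fderiv
  have hDfib' : ∀ a : ((Fin n → ℝ) × (Fin N → ℝ)), fderiv ℝ (fiberDeriv n N S) e a
      = fun j => f'' a ((0 : Fin n → ℝ), Pi.single j 1) := by
    intro a; rw [hDfib]; rfl
  -- derivative of iS
  set Ψ : (((Fin n → ℝ) × (Fin N → ℝ)) →L[ℝ] ℝ) →L[ℝ] (Fin n → ℝ) :=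
    ContinuousLinearMap.pi (fun i => ContinuousLinearMap.apply ℝ ℝ
      ((Pi.single i 1, (0 : Fin N → ℝ)) : ((Fin n → ℝ) × (Fin N → ℝ)))) with hΨdef
  have hDiS : fderiv ℝ (iS n N S) e
      = (ContinuousLinearMap.fst ℝ (Fin n → ℝ) (Fin N → ℝ)).prod (Ψ.comp f'') := by
    have : HasFDerivAt (iS n N S)
        ((ContinuousLinearMap.fst ℝ (Fin n → ℝ) (Fin N → ℝ)).prod (Ψ.comp f'')) e := by
      have h2 : HasFDerivAt (gradq n N S) (Ψ.comp f'') e := by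
        rw [hgrad]; exact (Ψ.hasFDerivAt.comp e hf'')
      exact (hasFDerivAt_fst).prodMk h2
    exact this.fderiv
  have hDiS' : ∀ a : ((Fin n → ℝ) × (Fin N → ℝ)), fderiv ℝ (iS n N S) e a
      = (a.1, fun i => f'' a (Pi.single i 1, (0 : Fin N → ℝ))) := by
    intro a; rw [hDiS]; rfl
  -- kernel membership characterization
  have hker : ∀ u : ((Fin n → ℝ) × (Fin N → ℝ)), u ∈ LinearMap.ker (fderiv ℝ (fiberDeriv n N S) e : (Fin n → ℝ) × (Fin N → ℝ) →ₗ[ℝ] Fin N → ℝ) ↔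
      ∀ j, f'' u ((0 : Fin n → ℝ), Pi.single j 1) = 0 := by
    intro u
    rw [LinearMap.mem_ker]
    constructor
    · intro h j
      have := congrFun (show fderiv ℝ (fiberDeriv n N S) e u = 0 from h) j
      rwa [hDfib' u] at this
    · intro h
      rw [ContinuousLinearMap.coe_coe, hDfib' u]; funext j; exact h j
  have hker0 : ∀ u : ((Fin n → ℝ) × (Fin N → ℝ)), (∀ j, f'' u ((0 : Fin n → ℝ), Pi.single j 1) = 0) →
      ∀ w : Fin N → ℝ, f'' u ((0 : Fin n → ℝ), w) = 0 := by
    intro u h w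
    rw [apply_zero_right]
    simp [h]
  refine ⟨?_, ?_, ?_⟩
  · -- dimension count
    have hrn := LinearMap.finrank_range_add_finrank_ker
      ((fderiv ℝ (fiberDeriv n N S) e : ((Fin n → ℝ) × (Fin N → ℝ)) →L[ℝ] (Fin N → ℝ)) : ((Fin n → ℝ) × (Fin N → ℝ)) →ₗ[ℝ] (Fin N → ℝ))
    rw [LinearMap.range_eq_top.mpr (by exact htrans)] at hrn
    have hkeq : LinearMap.ker ((fderiv ℝ (fiberDeriv n N S) e :
        ((Fin n → ℝ) × (Fin N → ℝ)) →L[ℝ] (Fin N → ℝ)) : ((Fin n → ℝ) × (Fin N → ℝ)) →ₗ[ℝ] (Fin N → ℝ))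
        = LinearMap.ker (fderiv ℝ (fiberDeriv n N S) e : (Fin n → ℝ) × (Fin N → ℝ) →ₗ[ℝ] Fin N → ℝ) := rfl
    rw [hkeq] at hrn
    simp only [finrank_top] at hrn
    have h1 : Module.finrank ℝ (Fin N → ℝ) = N := by simp
    have h2 : Module.finrank ℝ ((Fin n → ℝ) × (Fin N → ℝ)) = n + N := by
      simp [Module.finrank_prod]
    rw [h1, h2] at hrn
    omega
  · intro u hu hiu
    have hu' := (hker u).mp hu
    have h1 : u.1 = 0 := by
      have := congrArg Prod.fst hiu
      rwa [hDiS' u] at this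
    have h2 : ∀ i, f'' u (Pi.single i 1, (0 : Fin N → ℝ)) = 0 := by
      intro i
      have := congrArg Prod.snd hiu
      rw [hDiS' u] at this
      exact congrFun this i
    have hzero : ∀ x : ((Fin n → ℝ) × (Fin N → ℝ)), f'' u x = 0 := by
      intro x
      rw [apply_split (f'' u) x, apply_zero_right, apply_zero_left]
      simp [h2, hu']
    -- use transversality
    obtain ⟨a, ha⟩ := htrans u.2
    have ha' : ∀ j, f'' a ((0 : Fin n → ℝ), Pi.single j 1) = u.2 j := by
      intro j
      have := congrFun ha j
      rwa [hDfib' a] at this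
    have key : f'' a ((0 : Fin n → ℝ), u.2) = 0 := by
      have h3 : f'' a u = 0 := by rw [hsymm a u]; exact hzero a
      have h4 : f'' a (u.1, (0 : Fin N → ℝ)) = 0 := by rw [h1, Prod.mk_zero_zero, map_zero]
      have := apply_split (f'' a) u
      rw [h3, h4] at this
      linarith
    rw [apply_zero_right] at key
    simp only [ha'] at key
    exact Prod.ext h1 (sum_sq_eq_zero u.2 key)
  · intro u hu v hv
    have hu' := hker0 u ((hker u).mp hu)
    have hv' := hker0 v ((hker v).mp hv)
    rw [hDiS' u, hDiS' v]
    simp only [omegaCan, dot]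
    have e1 : ∑ i, u.1 i * f'' v (Pi.single i 1, (0 : Fin N → ℝ))
        = f'' v (u.1, (0 : Fin N → ℝ)) := (apply_zero_left (f'' v) u.1).symm
    have e2 : ∑ i, v.1 i * f'' u (Pi.single i 1, (0 : Fin N → ℝ))
        = f'' u (v.1, (0 : Fin N → ℝ)) := (apply_zero_left (f'' u) v.1).symm
    rw [e1, e2]
    have e3 : f'' v (u.1, (0 : Fin N → ℝ)) = f'' v u := by
      rw [apply_split (f'' v) u, hv' u.2]; ring
    have e4 : f'' u (v.1, (0 : Fin N → ℝ)) = f'' u v := by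
      rw [apply_split (f'' u) v, hu' v.2]; ring
    rw [e3, e4, hsymm v u]
    ring
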